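/- Let n1, n2, n3 ≥ 2, let h, h' ∈ {0,…,n3−1} with h ≠ h', let i ∈ {0,…,n1−1} and j ∈ {0,…,n2−1}. Then the set S = {(0,0,h), (n1−1,0,h), (0,n2−1,h), (i,j,h')} is a resolving set for the 3D grid P_{n1}□P_{n2}□P_{n3}. -/
import Mathlib


/-- Vertices of the 3D grid `P_{n1} □ P_{n2} □ P_{n3}`. -/
abbrev GridV (n1 n2 n3 : ℕ) := Fin n1 × Fin n2 × Fin n3

/-- Graph distance in the 3D grid: the ℓ₁ (Manhattan) distance. -/
def gridDist {n1 n2 n3 : ℕ} (u v : GridV n1 n2 n3) : ℕ :=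
  ((u.1 : ℤ) - (v.1 : ℤ)).natAbs + ((u.2.1 : ℤ) - (v.2.1 : ℤ)).natAbs +
    ((u.2.2 : ℤ) - (v.2.2 : ℤ)).natAbs

/-- A vertex `w` resolves the pair `u`, `v`. -/
abbrev gridResolves {n1 n2 n3 : ℕ} (w u v : GridV n1 n2 n3) : Prop :=
  gridDist w u ≠ gridDist w v

/-- `S` is a resolving set for the 3D grid. -/
def IsResolvingSet {n1 n2 n3 : ℕ} (S : Set (GridV n1 n2 n3)) : Prop :=
  ∀ u v : GridV n1 n2 n3, u ≠ v → ∃ w ∈ S, gridResolves w u v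

/-- `S` is an `m`-resolving set: each pair of distinct vertices is resolved by
at least `m` vertices of `S`. -/
def IsKResolvingSet {n1 n2 n3 : ℕ} (m : ℕ) (S : Finset (GridV n1 n2 n3)) : Prop :=
  ∀ u v : GridV n1 n2 n3, u ≠ v →
    m ≤ (S.filter (fun w => gridResolves w u v)).card

/-- The metric dimension of the 3D grid. -/
noncomputable def gridMetricDim (n1 n2 n3 : ℕ) : ℕ :=
  sInf { m | ∃ S : Finset (GridV n1 n2 n3),
    IsResolvingSet (S : Set (GridV n1 n2 n3)) ∧ S.card = m }

/-- The `m`-metric dimension of the 3D grid. -/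
noncomputable def gridKMetricDim (m n1 n2 n3 : ℕ) : ℕ :=
  sInf { c | ∃ S : Finset (GridV n1 n2 n3), IsKResolvingSet m S ∧ S.card = c }

/-- `F(n1,n2,n3)`: the boundary vertices of the grid. -/
def gridBoundary (n1 n2 n3 : ℕ) : Finset (GridV n1 n2 n3) :=
  Finset.univ.filter (fun z =>
    z.1.val = 0 ∨ z.1.val = n1 - 1 ∨ z.2.1.val = 0 ∨ z.2.1.val = n2 - 1 ∨
    z.2.2.val = 0 ∨ z.2.2.val = n3 - 1)

/-- `α_M(n1,n2,n3) = min{n1(n2+n3−2), n2(n1+n3−2), n3(n1+n2−2)}`. -/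
def alphaM (n1 n2 n3 : ℕ) : ℕ :=
  min (n1 * (n2 + n3 - 2)) (min (n2 * (n1 + n3 - 2)) (n3 * (n1 + n2 - 2)))

/-- `α_m(n1,n2,n3) = 2(n1+n2+n3) − 8`. -/
def alpham (n1 n2 n3 : ℕ) : ℕ := 2 * (n1 + n2 + n3) - 8

set_option maxHeartbeats 1000000 in
/-- The set {(0,0,h), (n1−1,0,h), (0,n2−1,h), (i,j,h')}, with h ≠ h', is a resolving
set for the 3D grid. -/
theorem grid3D_resolving_set_of_four (n1 n2 n3 : ℕ)
    (h1 : 2 ≤ n1) (h2 : 2 ≤ n2) (h3 : 2 ≤ n3)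
    (h h' : Fin n3) (hne : h ≠ h') (i : Fin n1) (j : Fin n2) :
    IsResolvingSet
      ({((⟨0, by omega⟩ : Fin n1), (⟨0, by omega⟩ : Fin n2), h),
        ((⟨n1 - 1, by omega⟩ : Fin n1), (⟨0, by omega⟩ : Fin n2), h),
        ((⟨0, by omega⟩ : Fin n1), (⟨n2 - 1, by omega⟩ : Fin n2), h),
        (i, j, h')} : Set (GridV n1 n2 n3)) := by
  intro u v huv
  by_contra hcon
  push_neg at hcon
  obtain ⟨⟨x1, hx1⟩, ⟨x2, hx2⟩, ⟨x3, hx3⟩⟩ := u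
  obtain ⟨⟨y1, hy1⟩, ⟨y2, hy2⟩, ⟨y3, hy3⟩⟩ := v
  have e1 := hcon ((⟨0, by omega⟩ : Fin n1), (⟨0, by omega⟩ : Fin n2), h) (by left; rfl)
  have e2 := hcon ((⟨n1 - 1, by omega⟩ : Fin n1), (⟨0, by omega⟩ : Fin n2), h)
    (by right; left; rfl)
  have e3 := hcon ((⟨0, by omega⟩ : Fin n1), (⟨n2 - 1, by omega⟩ : Fin n2), h)
    (by right; right; left; rfl)
  have e4 := hcon (i, j, h') (by right; right; right; rfl)
  simp only [gridDist, gridResolves, not_ne_iff] at e1 e2 e3 e4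
  simp only [ne_eq, Prod.mk.injEq, Fin.mk.injEq, not_and, Fin.ext_iff] at huv
  have hne' : (h : ℕ) ≠ (h' : ℕ) := fun hh => hne (Fin.ext hh)
  clear hcon hne h1 h2 h3
  simp only [zero_sub, Int.natAbs_neg, Int.natAbs_natCast, Nat.cast_zero] at e1 e2 e3
  have a2x : (((n1 - 1 : ℕ) : ℤ) - (x1 : ℤ)).natAbs = n1 - 1 - x1 := by omega
  have a2y : (((n1 - 1 : ℕ) : ℤ) - (y1 : ℤ)).natAbs = n1 - 1 - y1 := by omega
  have a3x : (((n2 - 1 : ℕ) : ℤ) - (x2 : ℤ)).natAbs = n2 - 1 - x2 := by omega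
  have a3y : (((n2 - 1 : ℕ) : ℤ) - (y2 : ℤ)).natAbs = n2 - 1 - y2 := by omega
  rw [a2x, a2y] at e2
  rw [a3x, a3y] at e3
  clear a2x a2y a3x a3y
  have k1 : x1 = y1 := by clear e3 e4; omega
  have k2 : x2 = y2 := by clear e2 e4; omega
  subst k1; subst k2
  omega
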